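/- Let P and Q be finite-dimensional posets with min(dim(P), dim(Q)) ≥ max(abs(P), abs(Q)). Then max(dim(P), dim(Q)) ≤ dim(P × Q) ≤ dim(P) + dim(Q) − max(abs(P), abs(Q)). -/

import Mathlib

universe u

/-- The order dimension of a poset: the least cardinal `κ` such that the partial
order is the intersection of `κ` linear orderings (each extending it). -/
noncomputable def orderDim (α : Type u) [PartialOrder α] : Cardinal.{u} :=
  sInf {κ : Cardinal.{u} | ∃ (ι : Type u) (r : ι → α → α → Prop),
    (∀ i, IsLinearOrder α (r i)) ∧
    (∀ x y : α, x ≤ y ↔ ∀ i, r i x y) ∧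
    Cardinal.mk ι = κ}

/-- The absorbency of a (finite-dimensional) poset `P`: the largest natural
number `n` such that taking the product of `P` with any `n`-tuple of (nonempty)
chains does not change the dimension. -/
noncomputable def absorb (P : Type u) [PartialOrder P] : ℕ :=
  sSup {n : ℕ | ∀ (T : Fin n → Type u) [∀ i, LinearOrder (T i)] [∀ i, Nonempty (T i)],
    orderDim (P × ∀ i, T i) = orderDim P}

/-- The bounded dimension of a (finite-dimensional) poset `P`: the greatest
natural number `n` such that some bounded subposet of `P` (equivalently, some
nonempty interval `[p, p']`) has dimension `n`. -/
noncomputable def bdDim (P : Type u) [PartialOrder P] : ℕ :=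
  sSup {n : ℕ | ∃ p p' : P, p ≤ p' ∧ orderDim ↥(Set.Icc p p') = n}

/-! The lower bound holds because `P` and `Q` embed into `P × Q`. For the upper bound let
`a = abs P ≤ dim Q`, and realize `Q` by `dim Q` linear orders, i.e. embed `Q` into a product of
`dim Q` chains `T₁, …, T_{dim Q}`. Then `P × Q` embeds into
`(P × T₁ × ⋯ × Tₐ) × (Tₐ₊₁ × ⋯ × T_{dim Q})`, and since dimension is subadditive on products and
`dim (P × T₁ × ⋯ × Tₐ) = dim P`, this gives `dim (P × Q) ≤ dim P + dim Q - a`. -/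

open Cardinal

def RelChain {α : Type u} (_r : α → α → Prop) : Type u := α

namespace RelChain

variable {α : Type u} (r : α → α → Prop)

noncomputable instance [IsLinearOrder α r] : LinearOrder (RelChain r) where
  le := r
  le_refl := refl_of r
  le_trans _ _ _ := trans_of r
  le_antisymm _ _ := antisymm_of r
  le_total := total_of r
  toDecidableLE := Classical.decRel _

instance [Nonempty α] : Nonempty (RelChain r) := ‹Nonempty α›

noncomputable def embeddingPi [PartialOrder α] {ι : Type*} (r : ι → α → α → Prop)
    [∀ i, IsLinearOrder α (r i)] (hr : ∀ x y : α, x ≤ y ↔ ∀ i, r i x y) :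
    α ↪o ∀ i, RelChain (r i) :=
  OrderEmbedding.ofMapLEIff (fun x _ => x) fun x y => (hr x y).symm

end RelChain

section SumElim

variable {ι κ : Type*} {C : ι → Type u} {D : κ → Type u}
  [∀ i, LinearOrder (C i)] [∀ j, LinearOrder (D j)]

instance Sum.elim.instLinearOrder : ∀ k, LinearOrder (Sum.elim C D k)
  | .inl i => inferInstanceAs (LinearOrder (C i))
  | .inr j => inferInstanceAs (LinearOrder (D j))

def OrderEmbedding.sumElimPi {α β : Type*} [PartialOrder α] [PartialOrder β]
    (f : α ↪o ∀ i, C i) (g : β ↪o ∀ j, D j) : α × β ↪o ∀ k, Sum.elim C D k :=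
  OrderEmbedding.ofMapLEIff (fun x => fun | .inl i => f x.1 i | .inr j => g x.2 j)
    fun _ _ => Sum.forall.trans (and_congr f.le_iff_le g.le_iff_le)

end SumElim

section OrderDim

variable {α β : Type u} [PartialOrder α] [PartialOrder β]

theorem orderDim_le_mk {ι : Type u} (r : ι → α → α → Prop) (hr : ∀ i, IsLinearOrder α (r i))
    (hle : ∀ x y : α, x ≤ y ↔ ∀ i, r i x y) : orderDim α ≤ #ι :=
  csInf_le' ⟨ι, r, hr, hle, rfl⟩

/-- Order each chain lexicographically, breaking ties with a fixed linear extension of `α`. -/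
theorem exists_linearOrders_of_orderEmbedding_pi {ι : Type*} {C : ι → Type*}
    [∀ i, LinearOrder (C i)] (f : α ↪o ∀ i, C i) :
    ∃ r : ι → α → α → Prop, (∀ i, IsLinearOrder α (r i)) ∧ ∀ x y : α, x ≤ y ↔ ∀ i, r i x y := by
  let g (i : ι) (x : α) : C i ×ₗ LinearExtension α := toLex (f x i, toLinearExtension x)
  have hg (i : ι) : (g i).Injective := fun x y h => congrArg (fun z => (ofLex z).2) h
  refine ⟨fun i => Function.onFun (· ≤ ·) (g i),
    fun i => (hg i).isLinearOrder_onFun (r := (· ≤ ·)), fun x y => ⟨?_, ?_⟩⟩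
  · exact fun h i => Prod.Lex.toLex_mono ⟨f.monotone h i, toLinearExtension.monotone h⟩
  · exact fun h => f.le_iff_le.mp fun i => Prod.Lex.monotone_fst (g i x) (g i y) (h i)

theorem orderDim_le_of_orderEmbedding_pi {ι : Type u} {C : ι → Type*} [∀ i, LinearOrder (C i)]
    (f : α ↪o ∀ i, C i) : orderDim α ≤ #ι :=
  have ⟨r, hr, hle⟩ := exists_linearOrders_of_orderEmbedding_pi f
  orderDim_le_mk r hr hle

/-- `α` embeds into `α → Prop` by `x ↦ (· ≤ x)`, so the infimum defining `orderDim` is taken over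
a nonempty set and is attained. -/
theorem exists_linearOrders_mk_eq_orderDim (α : Type u) [PartialOrder α] :
    ∃ (ι : Type u) (r : ι → α → α → Prop), (∀ i, IsLinearOrder α (r i)) ∧
      (∀ x y : α, x ≤ y ↔ ∀ i, r i x y) ∧ #ι = orderDim α := by
  let f : α ↪o (α → Prop) := OrderEmbedding.ofMapLEIff (fun x a => a ≤ x)
    fun x y => ⟨fun h => h x le_rfl, fun h _ hax => hax.trans h⟩
  obtain ⟨r, hr, hle⟩ := exists_linearOrders_of_orderEmbedding_pi f
  exact (csInf_mem ⟨#α, α, r, hr, hle, rfl⟩ : orderDim α ∈ _)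

theorem exists_linearOrders_of_mk_eq_orderDim {ι : Type u} (hι : #ι = orderDim α) :
    ∃ r : ι → α → α → Prop, (∀ i, IsLinearOrder α (r i)) ∧ ∀ x y : α, x ≤ y ↔ ∀ i, r i x y := by
  obtain ⟨κ, r, hr, hle, hκ⟩ := exists_linearOrders_mk_eq_orderDim α
  obtain ⟨e⟩ := Cardinal.eq.mp (hι.trans hκ.symm)
  exact ⟨fun i => r (e i), fun i => hr (e i), fun x y => (hle x y).trans e.forall_congr_right.symm⟩

theorem orderDim_le_of_orderEmbedding (f : α ↪o β) : orderDim α ≤ orderDim β := by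
  obtain ⟨ι, r, hr, hle, hι⟩ := exists_linearOrders_mk_eq_orderDim β
  exact hι ▸ orderDim_le_of_orderEmbedding_pi (f.trans (RelChain.embeddingPi r hle))

theorem orderDim_congr (e : α ≃o β) : orderDim α = orderDim β :=
  (orderDim_le_of_orderEmbedding e.toOrderEmbedding).antisymm
    (orderDim_le_of_orderEmbedding e.symm.toOrderEmbedding)

theorem orderDim_le_orderDim_prod_left [Nonempty β] : orderDim α ≤ orderDim (α × β) :=
  orderDim_le_of_orderEmbedding <| OrderEmbedding.ofMapLEIff (fun a => (a, Classical.arbitrary β))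
    fun _ _ => and_iff_left le_rfl

theorem orderDim_le_orderDim_prod_right [Nonempty α] : orderDim β ≤ orderDim (α × β) :=
  orderDim_le_of_orderEmbedding <| OrderEmbedding.ofMapLEIff (fun b => (Classical.arbitrary α, b))
    fun _ _ => and_iff_right le_rfl

theorem orderDim_prod_le_add : orderDim (α × β) ≤ orderDim α + orderDim β := by
  obtain ⟨ι, r, hr, hle, hι⟩ := exists_linearOrders_mk_eq_orderDim α
  obtain ⟨κ, s, hs, hsle, hκ⟩ := exists_linearOrders_mk_eq_orderDim β
  calc orderDim (α × β) ≤ #(ι ⊕ κ) := orderDim_le_of_orderEmbedding_pi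
        ((RelChain.embeddingPi r hle).sumElimPi (RelChain.embeddingPi s hsle))
    _ = orderDim α + orderDim β := by rw [mk_sum, lift_id, lift_id, hι, hκ]

end OrderDim

section Absorb

variable {A B : Type u} [PartialOrder A] [PartialOrder B]

theorem orderDim_prod_pi_absorb (T : Fin (absorb A) → Type u) [∀ i, LinearOrder (T i)]
    [∀ i, Nonempty (T i)] : orderDim (A × ∀ i, T i) = orderDim A := by
  have sSup_mem_of_zero_mem (S : Set ℕ) (h0 : 0 ∈ S) : sSup S ∈ S := by
    by_cases hS : BddAbove S
    · exact Nat.sSup_mem ⟨0, h0⟩ hS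
    · rwa [Nat.sSup_of_not_bddAbove hS]
  have hmem : absorb A ∈ _ := sSup_mem_of_zero_mem _ fun T _ _ => orderDim_congr
    { Equiv.prodUnique A (∀ i, T i) with map_rel_iff' := (and_iff_left finZeroElim).symm }
  exact @hmem T ‹_› ‹_›

/-- The first `absorb A` of the chains realizing `B` are absorbed into `A`. -/
theorem orderDim_prod_le_add_of_absorb [Nonempty B] {b : ℕ} (hB : orderDim B = absorb A + b) :
    orderDim (A × B) ≤ orderDim A + b := by
  obtain ⟨s, hs, hle⟩ := exists_linearOrders_of_mk_eq_orderDim (α := B)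
    (ι := Fin (absorb A) ⊕ ULift (Fin b)) (by simp [hB])
  let e : A × B ↪o (A × ∀ k, RelChain (s (.inl k))) × ∀ j, RelChain (s (.inr j)) :=
    OrderEmbedding.ofMapLEIff (fun x => ((x.1, fun _ => x.2), fun _ => x.2))
      fun x y => and_assoc.trans (and_congr_right' (Sum.forall.symm.trans (hle x.2 y.2).symm))
  calc orderDim (A × B)
      ≤ orderDim ((A × ∀ k, RelChain (s (.inl k))) × ∀ j, RelChain (s (.inr j))) :=
        orderDim_le_of_orderEmbedding e
    _ ≤ orderDim (A × ∀ k, RelChain (s (.inl k))) + orderDim (∀ j, RelChain (s (.inr j))) :=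
        orderDim_prod_le_add
    _ ≤ orderDim A + #(ULift (Fin b)) :=
        add_le_add (orderDim_prod_pi_absorb _).le (orderDim_le_of_orderEmbedding_pi (.refl _))
    _ = orderDim A + b := by rw [mk_uLift, mk_fin, lift_natCast]

theorem orderDim_prod_le_sub_absorb [Nonempty B] {dA dB : ℕ} (hA : orderDim A = dA)
    (hB : orderDim B = dB) (h : absorb A ≤ dB) :
    orderDim (A × B) ≤ ((dA + dB - absorb A : ℕ) : Cardinal) := by
  have := orderDim_prod_le_add_of_absorb (A := A) (b := dB - absorb A)
    (by rw [hB]; exact_mod_cast (Nat.add_sub_cancel' h).symm)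
  rwa [hA, ← Nat.cast_add, ← Nat.add_sub_assoc h] at this

end Absorb

theorem stmt15 (P Q : Type u) [PartialOrder P] [Nonempty P] [PartialOrder Q] [Nonempty Q]
    (dP dQ : ℕ) (hdP : orderDim P = dP) (hdQ : orderDim Q = dQ)
    (habs : max (absorb P) (absorb Q) ≤ min dP dQ) :
    (max dP dQ : Cardinal) ≤ orderDim (P × Q) ∧
    orderDim (P × Q) ≤ ((dP + dQ - max (absorb P) (absorb Q) : ℕ) : Cardinal) := by
  refine ⟨max_le (hdP ▸ orderDim_le_orderDim_prod_left) (hdQ ▸ orderDim_le_orderDim_prod_right), ?_⟩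
  rcases le_total (absorb Q) (absorb P) with h | h
  · rw [max_eq_left h] at habs ⊢
    exact orderDim_prod_le_sub_absorb hdP hdQ (habs.trans (min_le_right _ _))
  · rw [max_eq_right h] at habs ⊢
    calc orderDim (P × Q) ≤ orderDim (Q × P) :=
          orderDim_le_of_orderEmbedding OrderIso.prodComm.toOrderEmbedding
      _ ≤ ((dQ + dP - absorb Q : ℕ) : Cardinal) :=
          orderDim_prod_le_sub_absorb hdQ hdP (habs.trans (min_le_left _ _))
      _ = ((dP + dQ - absorb Q : ℕ) : Cardinal) := by rw [add_comm]
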